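/- arXiv:2507.22507 — 2 statements merged into one kernel-verified Lean document; each statement's English description precedes it below -/
import Mathlib

section
/- Let T be a spherically homogeneous rooted tree, let G ≤ Aut T be a weakly branch group, let v be a vertex of T, and let H ≤ G be a subgroup of finite index. Then the commutator subgroup of rist_G(v) ∩ H is nontrivial; in particular rist_G(v) ∩ H is not abelian. -/
open Equiv

/-- Vertices of the spherically homogeneous rooted tree of type `m`: finite sequences
`(v_0, …, v_{n−1})` with `v_i ∈ Fin (m i)`. -/
def Vertex (m : ℕ → ℕ) : Type := (n : ℕ) × (∀ i : Fin n, Fin (m i))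

/-- `u` is a prefix of `v` (i.e. `u` is an ancestor of `v`, or `u = v`). -/
def IsPrefixV {m : ℕ → ℕ} (u v : Vertex m) : Prop :=
  u.1 ≤ v.1 ∧ ∀ (i : ℕ) (hu : i < u.1) (hv : i < v.1), (u.2 ⟨i, hu⟩ : ℕ) = (v.2 ⟨i, hv⟩ : ℕ)

/-- The automorphism group `Aut T` of the tree: the permutations of the vertex set which
preserve the length (level) and the prefix relation. -/
def treeAut (m : ℕ → ℕ) : Subgroup (Perm (Vertex m)) where
  carrier := {f | (∀ v, (f v).1 = v.1) ∧ ∀ u v, IsPrefixV u v ↔ IsPrefixV (f u) (f v)}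
  one_mem' := ⟨fun _ => rfl, fun _ _ => by simp⟩
  mul_mem' := by
    rintro f g ⟨hf1, hf2⟩ ⟨hg1, hg2⟩
    refine ⟨fun v => ?_, fun u v => ?_⟩
    · rw [Perm.mul_apply, hf1, hg1]
    · rw [Perm.mul_apply, Perm.mul_apply, ← hf2, ← hg2]
  inv_mem' := by
    rintro f ⟨hf1, hf2⟩
    refine ⟨fun v => ?_, fun u v => ?_⟩
    · have h := hf1 (f⁻¹ v)
      rw [Perm.inv_def, Equiv.apply_symm_apply] at h
      exact h.symm
    · have h := hf2 (f⁻¹ u) (f⁻¹ v)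
      simp only [Perm.inv_def, Equiv.apply_symm_apply] at h
      exact h.symm

theorem Equiv.Perm.apply_inv_self {α : Type*} (f : Perm α) (x : α) : f (f⁻¹ x) = x :=
  f.apply_symm_apply x

variable {m : ℕ → ℕ}

/-- The stabilizer `st_G(v)` of a vertex `v` in `G`. -/
def st (G : Subgroup (Perm (Vertex m))) (v : Vertex m) : Subgroup (Perm (Vertex m)) :=
  G ⊓ MulAction.stabilizer (Perm (Vertex m)) v

/-- The rigid vertex stabilizer `rist_G(v)`: elements of `G` fixing every vertex that does not
have `v` as a prefix. -/
def rist (G : Subgroup (Perm (Vertex m))) (v : Vertex m) : Subgroup (Perm (Vertex m)) :=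
  G ⊓ fixingSubgroup (Perm (Vertex m)) {u | ¬ IsPrefixV v u}

/-- The level stabilizer `St_G(n)`: the pointwise stabilizer in `G` of all vertices of length
`n`. -/
def StL (G : Subgroup (Perm (Vertex m))) (n : ℕ) : Subgroup (Perm (Vertex m)) :=
  G ⊓ fixingSubgroup (Perm (Vertex m)) {u : Vertex m | u.1 = n}

/-- `G` acts transitively on every level of the tree. -/
def LevelTransitive (G : Subgroup (Perm (Vertex m))) : Prop :=
  ∀ u v : Vertex m, u.1 = v.1 → ∃ g ∈ G, g u = v

/-- `G` is weakly branch: level-transitive with all rigid vertex stabilizers infinite. -/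
def IsWeaklyBranch (G : Subgroup (Perm (Vertex m))) : Prop :=
  LevelTransitive G ∧ ∀ v : Vertex m, Infinite (rist G v)

/-- The conjugate subgroup `g B g⁻¹`. -/
def conjS {Γ : Type*} [Group Γ] (g : Γ) (B : Subgroup Γ) : Subgroup Γ :=
  Subgroup.map (MulAut.conj g).toMonoidHom B

/-- A weakly branch action of a group `G` on the tree of type `m`: an injective homomorphism
into `Aut T` whose image is weakly branch. -/
def IsWBAction {G : Type*} [Group G] (m : ℕ → ℕ) (ρ : G →* Perm (Vertex m)) : Prop :=
  Function.Injective ρ ∧ ρ.range ≤ treeAut m ∧ IsWeaklyBranch ρ.range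

/-- `G` is `T`-rigid: it admits a weakly branch action on `T` and the images of any two weakly
branch actions are conjugate in `Aut T`. -/
def TRigid (G : Type*) [Group G] (m : ℕ → ℕ) : Prop :=
  (∃ ρ : G →* Perm (Vertex m), IsWBAction m ρ) ∧
  ∀ ρ τ : G →* Perm (Vertex m), IsWBAction m ρ → IsWBAction m τ →
    ∃ f ∈ treeAut m, τ.range = conjS f ρ.range

/-- `st_ρ(v) = ρ⁻¹(st_{ρ(G)}(v))`. -/
def stA {G : Type*} [Group G] (ρ : G →* Perm (Vertex m)) (v : Vertex m) : Subgroup G :=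
  Subgroup.comap ρ (st ρ.range v)

/-- `rist_ρ(v) = ρ⁻¹(rist_{ρ(G)}(v))`. -/
def ristA {G : Type*} [Group G] (ρ : G →* Perm (Vertex m)) (v : Vertex m) : Subgroup G :=
  Subgroup.comap ρ (rist ρ.range v)

lemma IsPrefixV.trans' {a b c : Vertex m} (h1 : IsPrefixV a b) (h2 : IsPrefixV b c) :
    IsPrefixV a c :=
  ⟨h1.1.trans h2.1, fun i ha hc =>
    (h1.2 i ha (lt_of_lt_of_le ha h1.1)).trans (h2.2 i (lt_of_lt_of_le ha h1.1) hc)⟩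

lemma prefix_eq_of_same_length {a b c : Vertex m} (hac : IsPrefixV a c) (hbc : IsPrefixV b c)
    (h : a.1 = b.1) : a = b := by
  obtain ⟨n, f⟩ := a
  obtain ⟨n', f'⟩ := b
  have h' : n = n' := h
  subst h'
  have hf : f = f' := by
    funext i
    apply Fin.ext
    have h1 := hac.2 i i.2 (lt_of_lt_of_le i.2 hac.1)
    have h2 := hbc.2 i i.2 (lt_of_lt_of_le i.2 hbc.1)
    exact h1.trans h2.symm
  subst hf
  rfl

lemma mem_treeAut_iff {g : Perm (Vertex m)} :
    g ∈ treeAut m ↔ (∀ v, (g v).1 = v.1) ∧ ∀ u v, IsPrefixV u v ↔ IsPrefixV (g u) (g v) :=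
  Iff.rfl

lemma mem_rist_iff {G : Subgroup (Perm (Vertex m))} {v : Vertex m} {g : Perm (Vertex m)} :
    g ∈ rist G v ↔ g ∈ G ∧ ∀ u, ¬ IsPrefixV v u → g u = u := by
  rw [rist, Subgroup.mem_inf]
  refine and_congr_right fun _ => ?_
  rw [mem_fixingSubgroup_iff]
  exact ⟨fun h u hu => h u hu, fun h u hu => h u hu⟩

lemma rist_fix {G : Subgroup (Perm (Vertex m))} {v : Vertex m} {g : Perm (Vertex m)}
    (hg : g ∈ rist G v) {u : Vertex m} (hu : ¬ IsPrefixV v u) : g u = u :=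
  (mem_rist_iff.mp hg).2 u hu

lemma rist_mono {G : Subgroup (Perm (Vertex m))} {v w : Vertex m} (hvw : IsPrefixV v w) :
    rist G w ≤ rist G v := by
  intro g hg
  rw [mem_rist_iff] at hg ⊢
  exact ⟨hg.1, fun u hu => hg.2 u fun hc => hu (hvw.trans' hc)⟩

lemma exists_ne_one_mem {Γ : Type*} [Group Γ] {G H K : Subgroup Γ}
    (hfin : H.relIndex G ≠ 0) (hKG : K ≤ G) (hK : Infinite K) :
    ∃ x : Γ, x ∈ K ⊓ H ∧ x ≠ 1 := by
  have h1 : H.relIndex K ≠ 0 := fun h =>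
    hfin (Subgroup.relIndex_eq_zero_of_le_right hKG h)
  have h3 : Nat.card K = 0 := Nat.card_eq_zero.mpr (Or.inr hK)
  have h4 : Nat.card (H.subgroupOf K) = 0 := by
    have hmul := Subgroup.index_mul_card (H.subgroupOf K)
    rw [h3] at hmul
    exact (Nat.mul_eq_zero.mp hmul).resolve_left h1
  have h5 : Infinite (H.subgroupOf K) := by
    rcases Nat.card_eq_zero.mp h4 with h | h
    · exact (h.false (1 : H.subgroupOf K)).elim
    · exact h
  obtain ⟨x, hx⟩ := exists_ne (1 : H.subgroupOf K)
  refine ⟨((x : K) : Γ), Subgroup.mem_inf.mpr ⟨(x : K).2, x.2⟩, fun hc => hx ?_⟩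
  ext
  exact hc

lemma moved_vertex_exists {g : Perm (Vertex m)} (hg : g ≠ 1) : ∃ u, g u ≠ u := by
  by_contra hc
  push_neg at hc
  exact hg (Equiv.ext hc)

open scoped commutatorElement

/-- Let `G ≤ Aut T` be a weakly branch group, `v` a vertex of `T`, and `H ≤ G` a subgroup of
finite index in `G`. Then the commutator subgroup of `rist_G(v) ∩ H` is nontrivial; in
particular `rist_G(v) ∩ H` is not abelian. -/
theorem commutator_rist_inf_ne_bot (m : ℕ → ℕ) (hm : ∀ n, 2 ≤ m n)
    (G : Subgroup (Perm (Vertex m))) (hG : G ≤ treeAut m) (hwb : IsWeaklyBranch G)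
    (v : Vertex m) (H : Subgroup (Perm (Vertex m))) (hHG : H ≤ G)
    (hfin : H.relIndex G ≠ 0) :
    ⁅rist G v ⊓ H, rist G v ⊓ H⁆ ≠ (⊥ : Subgroup (Perm (Vertex m))) ∧
      ¬ ∀ x ∈ rist G v ⊓ H, ∀ y ∈ rist G v ⊓ H, Commute x y := by
  classical
  have key : ∀ w : Vertex m, ∃ x : Perm (Vertex m), x ∈ rist G w ⊓ H ∧ x ≠ 1 := by
    intro w
    have hinf : Infinite (rist G w) := hwb.2 w
    have hle : rist G w ≤ G := inf_le_left
    obtain ⟨x, hx, hx1⟩ := exists_ne_one_mem hfin hle hinf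
    exact ⟨x, hx, hx1⟩
  obtain ⟨g, hg, hg1⟩ := key v
  obtain ⟨w, hw⟩ := moved_vertex_exists hg1
  have hgrist := (Subgroup.mem_inf.mp hg).1
  have hgH := (Subgroup.mem_inf.mp hg).2
  have hvw : IsPrefixV v w := by
    by_contra hcon
    exact hw (rist_fix hgrist hcon)
  obtain ⟨h, hh, hh1⟩ := key w
  have hhrist := (Subgroup.mem_inf.mp hh).1
  have hhH := (Subgroup.mem_inf.mp hh).2
  have hhv : h ∈ rist G v ⊓ H := Subgroup.mem_inf.mpr ⟨rist_mono hvw hhrist, hhH⟩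
  obtain ⟨u, hu⟩ := moved_vertex_exists hh1
  -- `g` is a tree automorphism
  have hgA : g ∈ treeAut m := hG ((mem_rist_iff.mp hgrist).1)
  obtain ⟨hglen, hgpref⟩ := mem_treeAut_iff.mp hgA
  -- `h⁻¹ u` lies below `w`
  have hy : IsPrefixV w (h⁻¹ u) := by
    by_contra hcon
    have h1 := rist_fix hhrist hcon
    rw [Perm.apply_inv_self] at h1
    apply hu
    nth_rewrite 1 [h1]
    exact Perm.apply_inv_self h u
  -- `g w` is not a prefix of `h⁻¹ u`
  have hne_pref : ¬ IsPrefixV (g w) (h⁻¹ u) := fun hcon =>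
    hw (prefix_eq_of_same_length hcon hy (hglen w))
  -- hence `w` is not a prefix of `g⁻¹ (h⁻¹ u)`
  have hnw : ¬ IsPrefixV w (g⁻¹ (h⁻¹ u)) := by
    intro hcon
    have := (hgpref w (g⁻¹ (h⁻¹ u))).mp hcon
    rw [Perm.apply_inv_self] at this
    exact hne_pref this
  have hfix : h (g⁻¹ (h⁻¹ u)) = g⁻¹ (h⁻¹ u) := rist_fix hhrist hnw
  have hcval : ⁅g, h⁆ u = h⁻¹ u := by
    show (g * h * g⁻¹ * h⁻¹) u = h⁻¹ u
    simp only [Perm.mul_apply]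
    rw [hfix, Perm.apply_inv_self]
  have hc_ne : ⁅g, h⁆ ≠ 1 := by
    intro hc
    rw [hc] at hcval
    simp only [Perm.one_apply] at hcval
    apply hu
    nth_rewrite 1 [hcval]
    exact Perm.apply_inv_self h u
  constructor
  · intro hbot
    have hmem : ⁅g, h⁆ ∈ ⁅rist G v ⊓ H, rist G v ⊓ H⁆ :=
      Subgroup.commutator_mem_commutator hg hhv
    rw [hbot] at hmem
    exact hc_ne (Subgroup.mem_bot.mp hmem)
  · intro hall
    exact hc_ne (commutatorElement_eq_one_iff_commute.mpr (hall g hg h hhv))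
end

section
/- Let G be a group, let B ≤ G be a basal subgroup, and let L be a subgroup of G with N_G(B) ≤ L ≤ G. Then the normal closure B^L of B in L (the subgroup generated by {l⁻¹·B·l : l ∈ L}) is a basal subgroup of G and N_G(B^L) = L. -/
/-- A subgroup `B` of a group `Γ` is basal if it has finitely many conjugates and its normal
closure is the internal direct product of its distinct conjugates: distinct conjugates commute
elementwise, each distinct conjugate intersects the subgroup generated by the remaining ones
trivially, and the conjugates together generate the normal closure. -/
def IsBasal {Γ : Type*} [Group Γ] (B : Subgroup Γ) : Prop :=
  (Set.range fun g : Γ => conjS g B).Finite ∧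
  (∀ g h : Γ, conjS g B ≠ conjS h B → ∀ x ∈ conjS g B, ∀ y ∈ conjS h B, Commute x y) ∧
  (∀ g : Γ, conjS g B ⊓ (⨆ h ∈ {h : Γ | conjS h B ≠ conjS g B}, conjS h B) = ⊥) ∧
  (⨆ g : Γ, conjS g B) = Subgroup.normalClosure (B : Set Γ)

section Aux

variable {Γ : Type*} [Group Γ]

lemma mem_conjS {x g : Γ} {B : Subgroup Γ} : x ∈ conjS g B ↔ g⁻¹ * x * g ∈ B := by
  constructor
  · rintro ⟨y, hy, rfl⟩
    simpa [MulAut.conj_apply, mul_assoc] using hy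
  · intro h
    exact ⟨g⁻¹ * x * g, h, by simp [MulAut.conj_apply]; group⟩

lemma conjS_conjS (g h : Γ) (B : Subgroup Γ) : conjS g (conjS h B) = conjS (g * h) B := by
  ext x
  simp only [mem_conjS, mul_inv_rev, mul_assoc]

lemma conjS_one (B : Subgroup Γ) : conjS 1 B = B := by
  ext x; simp [mem_conjS]

lemma conjS_bot (g : Γ) : conjS g (⊥ : Subgroup Γ) = ⊥ :=
  Subgroup.map_bot _

lemma conjS_mono (g : Γ) {B C : Subgroup Γ} (h : B ≤ C) : conjS g B ≤ conjS g C :=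
  Subgroup.map_mono h

lemma conjS_iSup (g : Γ) {η : Sort*} (K : η → Subgroup Γ) :
    conjS g (⨆ i, K i) = ⨆ i, conjS g (K i) :=
  (Subgroup.gc_map_comap _).l_iSup

lemma conjS_eq_bot_iff {g : Γ} {B : Subgroup Γ} : conjS g B = ⊥ ↔ B = ⊥ := by
  constructor
  · intro h
    have := congrArg (conjS g⁻¹) h
    rwa [conjS_conjS, inv_mul_cancel, conjS_one, conjS_bot] at this
  · rintro rfl; exact conjS_bot g

lemma conjS_eq_self_iff {g : Γ} {B : Subgroup Γ} : conjS g B = B ↔ g ∈ Subgroup.normalizer (B : Set Γ) := by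
  rw [Subgroup.mem_normalizer_iff]
  constructor
  · intro h n
    have h2 := SetLike.ext_iff.mp h (g * n * g⁻¹)
    rw [mem_conjS] at h2
    have e : g⁻¹ * (g * n * g⁻¹) * g = n := by group
    rw [e] at h2
    exact h2
  · intro h
    ext x
    rw [mem_conjS]
    have h2 := h (g⁻¹ * x * g)
    have e : g * (g⁻¹ * x * g) * g⁻¹ = x := by group
    rw [e] at h2
    exact h2

lemma conjS_eq_conjS_iff {g h : Γ} {B : Subgroup Γ} :
    conjS g B = conjS h B ↔ h⁻¹ * g ∈ Subgroup.normalizer (B : Set Γ) := by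
  rw [← conjS_eq_self_iff (g := h⁻¹ * g)]
  constructor
  · intro he
    have := congrArg (conjS h⁻¹) he
    rwa [conjS_conjS, conjS_conjS, inv_mul_cancel, conjS_one] at this
  · intro he
    have := congrArg (conjS h) he
    rwa [conjS_conjS, mul_inv_cancel_left] at this

lemma biSup_commute {ι κ : Sort*} (A : ι → Subgroup Γ) (E : κ → Subgroup Γ)
    (h : ∀ i j, ∀ x ∈ A i, ∀ y ∈ E j, Commute x y) :
    ∀ x ∈ ⨆ i, A i, ∀ y ∈ ⨆ j, E j, Commute x y := by
  intro x hx y hy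
  have h1 : (⨆ i, A i) ≤ Subgroup.centralizer ↑(⨆ j, E j) := by
    refine iSup_le fun i => fun z hz => ?_
    rw [Subgroup.mem_centralizer_iff]
    intro w hw
    have h2 : (⨆ j, E j) ≤ Subgroup.centralizer {z} := by
      refine iSup_le fun j => fun u hu => ?_
      rw [Subgroup.mem_centralizer_iff]
      intro v hv
      rw [Set.mem_singleton_iff] at hv
      subst hv
      exact h i j v hz u hu
    exact (h2 hw z rfl).symm
  exact ((h1 hx) y hy).symm

lemma keyDisjoint {ι : Type*} [Fintype ι] (C : ι → Subgroup Γ)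
    (hcomm : Pairwise fun i j : ι => ∀ x y : Γ, x ∈ C i → y ∈ C j → Commute x y)
    (hind : iSupIndep C) {S T : Set ι} (hST : ∀ i, i ∈ S → i ∉ T) :
    Disjoint (⨆ i ∈ S, C i) (⨆ i ∈ T, C i) := by
  classical
  set φ := Subgroup.noncommPiCoprod hcomm with hφ
  have hφinj : Function.Injective φ :=
    Subgroup.injective_noncommPiCoprod_of_iSupIndep hind
  have key : ∀ (U : Set ι), (⨆ i ∈ U, C i) ≤
      Subgroup.map φ (Subgroup.pi Uᶜ (fun _ => ⊥)) := by
    intro U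
    refine iSup₂_le fun i hi => fun y hy => ?_
    refine ⟨Pi.mulSingle i ⟨y, hy⟩, ?_, Subgroup.noncommPiCoprod_mulSingle i ⟨y, hy⟩⟩
    intro j hj
    have hne : j ≠ i := fun hji => hj (hji ▸ hi)
    simp [Pi.mulSingle_eq_of_ne hne]
  rw [Subgroup.disjoint_def]
  intro x hxS hxT
  obtain ⟨f, hf, rfl⟩ := key S hxS
  obtain ⟨g, hg, hfg⟩ := key T hxT
  have hgf : g = f := hφinj hfg
  have hf1 : f = 1 := by
    funext i
    by_cases hiS : i ∈ S
    · have hg1 : g i = 1 := by simpa using hg i (hST i hiS)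
      rw [← hgf, hg1]; rfl
    · simpa using hf i hiS
  rw [hf1, map_one]

end Aux

/-- Let `G` be a group, `B ≤ G` a basal subgroup, and `L` a subgroup with `N_G(B) ≤ L ≤ G`.
Then the normal closure `B^L` of `B` in `L` (the subgroup generated by the conjugates of `B`
by elements of `L`) is basal and `N_G(B^L) = L`. -/
theorem basal_normal_closure (Γ : Type*) [Group Γ] (B : Subgroup Γ) (hB : IsBasal B)
    (L : Subgroup Γ) (hL : Subgroup.normalizer (B : Set Γ) ≤ L) :
    IsBasal (⨆ l ∈ L, conjS l B) ∧ Subgroup.normalizer ((⨆ l ∈ L, conjS l B : Subgroup Γ) : Set Γ) = L := by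
  classical
  obtain ⟨hfin, hcomm, hind, hclos⟩ := hB
  set D : Subgroup Γ := ⨆ l ∈ L, conjS l B with hDdef
  -- description of conjugates of D
  have hD : ∀ g : Γ, conjS g D = ⨆ l : L, conjS (g * l) B := by
    intro g
    rw [hDdef, iSup_subtype', conjS_iSup]
    exact iSup_congr fun l => conjS_conjS g l B
  -- elements of the same coset of L give the same conjugate of D
  have hco : ∀ g h : Γ, h⁻¹ * g ∈ L → conjS g D = conjS h D := by
    intro g h hgh
    rw [hD, hD]
    apply le_antisymm
    · refine iSup_le fun l => ?_
      have e : h * ((⟨h⁻¹ * g, hgh⟩ * l : L) : Γ) = g * l := by push_cast; group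
      have h2 := le_iSup (fun m : L => conjS (h * m) B) (⟨h⁻¹ * g, hgh⟩ * l)
      rwa [e] at h2
    · refine iSup_le fun m => ?_
      have hmem : (g⁻¹ * h : Γ) ∈ L := by
        have := L.inv_mem hgh; simpa using this
      have e : g * ((⟨g⁻¹ * h, hmem⟩ * m : L) : Γ) = h * m := by push_cast; group
      have h2 := le_iSup (fun l : L => conjS (g * l) B) (⟨g⁻¹ * h, hmem⟩ * m)
      rwa [e] at h2
  -- distinct conjugates of D consist of distinct conjugates of B
  have hne : ∀ g h : Γ, conjS g D ≠ conjS h D → ∀ l m : L,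
      conjS (g * l) B ≠ conjS (h * m) B := by
    intro g h hgh l m heq
    apply hgh
    rw [conjS_eq_conjS_iff] at heq
    have hmem : (h⁻¹ * g : Γ) ∈ L := by
      have h1 : ((h * m)⁻¹ * (g * l) : Γ) ∈ L := hL heq
      have : (h⁻¹ * g : Γ) = (m : Γ) * ((h * m)⁻¹ * (g * l)) * (l : Γ)⁻¹ := by group
      rw [this]
      exact L.mul_mem (L.mul_mem m.2 h1) (L.inv_mem l.2)
    exact hco g h hmem
  -- conjS g B is included in conjS g D
  have hBD : ∀ g : Γ, conjS g B ≤ conjS g D := by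
    intro g
    rw [hD]
    have : conjS g B = conjS (g * (1 : L)) B := by norm_num
    rw [this]
    exact le_iSup (fun l : L => conjS (g * l) B) 1
  -- if B ≠ ⊥, equal conjugates of D come from the same coset
  have hinj : B ≠ ⊥ → ∀ g h : Γ, conjS g D = conjS h D → h⁻¹ * g ∈ L := by
    intro hBbot g h heq
    by_contra hgL
    have hnot : ∀ m : L, conjS (h * m) B ≠ conjS g B := by
      intro m hm
      rw [conjS_eq_conjS_iff] at hm
      have h1 : (g⁻¹ * (h * m) : Γ) ∈ L := hL hm
      apply hgL
      have : (h⁻¹ * g : Γ) = ((g⁻¹ * (h * m)) * (m : Γ)⁻¹)⁻¹ := by group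
      rw [this]
      exact L.inv_mem (L.mul_mem h1 (L.inv_mem m.2))
    have hle : conjS g B ≤ ⨆ k ∈ {k : Γ | conjS k B ≠ conjS g B}, conjS k B := by
      calc conjS g B ≤ conjS g D := hBD g
        _ = conjS h D := heq
        _ = ⨆ m : L, conjS (h * m) B := hD h
        _ ≤ ⨆ k ∈ {k : Γ | conjS k B ≠ conjS g B}, conjS k B := by
            refine iSup_le fun m => ?_
            exact le_iSup₂ (f := fun k _ => conjS k B) (h * (m : Γ)) (hnot m)
    have hbot : conjS g B = ⊥ := by
      have := hind g
      rw [← this]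
      exact le_antisymm (le_inf le_rfl hle) inf_le_left
    exact hBbot (conjS_eq_bot_iff.mp hbot)
  -- normalizer of D is L
  have hnorm : Subgroup.normalizer (D : Set Γ) = L := by
    apply le_antisymm
    · intro g hg
      by_cases hBbot : B = ⊥
      · have : Subgroup.normalizer (B : Set Γ) = ⊤ := by
          rw [hBbot]
          ext x
          simp only [Subgroup.mem_top, iff_true]
          rw [Subgroup.mem_normalizer_iff]
          intro h
          simp
        have : L = ⊤ := top_le_iff.mp (this ▸ hL)
        rw [this]; trivial
      · have hgD : conjS g D = D := conjS_eq_self_iff.mpr hg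
        have := hinj hBbot g 1 (by rw [conjS_one]; exact hgD)
        simpa using this
    · intro l hl
      rw [← conjS_eq_self_iff]
      have := hco l 1 (by simpa using hl)
      rwa [conjS_one] at this
  refine ⟨⟨?_, ?_, ?_, ?_⟩, hnorm⟩
  -- finiteness
  · have hsub : (Set.range fun g : Γ => conjS g D) ⊆
        (fun s : Set (Subgroup Γ) => sSup s) ''
          {s : Set (Subgroup Γ) | s ⊆ Set.range fun g : Γ => conjS g B} := by
      rintro _ ⟨g, rfl⟩
      refine ⟨Set.range fun l : L => conjS (g * l) B, ?_, ?_⟩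
      · rintro _ ⟨l, rfl⟩; exact ⟨g * l, rfl⟩
      · show sSup _ = conjS g D
        rw [sSup_range, hD g]
    exact Set.Finite.subset (Set.Finite.image _ hfin.finite_subsets) hsub
  -- commuting
  · intro g h hgh x hx y hy
    rw [hD] at hx hy
    exact biSup_commute (fun l : L => conjS (g * l) B) (fun m : L => conjS (h * m) B)
      (fun l m => hcomm (g * l) (h * m) (hne g h hgh l m)) x hx y hy
  -- independence
  · intro g
    by_cases hBbot : B = ⊥
    · have hDbot : D = ⊥ := by
        rw [hDdef, hBbot]
        refine le_antisymm (iSup₂_le fun l _ => (conjS_bot l).le) bot_le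
      rw [hDbot, conjS_bot, bot_inf_eq]
    · -- index type: the set of conjugates of B
      haveI : Fintype ↥(Set.range fun g : Γ => conjS g B) := hfin.fintype
      set ι := ↥(Set.range fun g : Γ => conjS g B)
      set C : ι → Subgroup Γ := Subtype.val with hC
      have hcommι : Pairwise fun i j : ι => ∀ x y : Γ, x ∈ C i → y ∈ C j → Commute x y := by
        intro i j hij x y hx hy
        obtain ⟨a, ha⟩ := i.2
        obtain ⟨b, hb⟩ := j.2
        replace ha : conjS a B = (i : Subgroup Γ) := ha
        replace hb : conjS b B = (j : Subgroup Γ) := hb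
        have : conjS a B ≠ conjS b B := by
          rw [ha, hb]
          exact fun h => hij (Subtype.ext h)
        exact hcomm a b this x (by rw [ha]; exact hx) y (by rw [hb]; exact hy)
      have hindι : iSupIndep C := by
        intro i
        obtain ⟨a, ha⟩ := i.2
        replace ha : conjS a B = (i : Subgroup Γ) := ha
        have hle : (⨆ (j : ι) (_ : j ≠ i), C j) ≤
            ⨆ k ∈ {k : Γ | conjS k B ≠ conjS a B}, conjS k B := by
          refine iSup₂_le fun j hj => ?_
          obtain ⟨b, hb⟩ := j.2
          replace hb : conjS b B = (j : Subgroup Γ) := hb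
          have hbne : conjS b B ≠ conjS a B := by
            rw [hb, ha]
            exact fun h => hj (Subtype.ext h)
          calc C j = conjS b B := hb.symm
            _ ≤ _ := le_iSup₂ (f := fun k _ => conjS k B) b hbne
        rw [disjoint_iff_inf_le]
        calc C i ⊓ (⨆ (j : ι) (_ : j ≠ i), C j)
            ≤ conjS a B ⊓ ⨆ k ∈ {k : Γ | conjS k B ≠ conjS a B}, conjS k B := by
              exact inf_le_inf (le_of_eq ha.symm) hle
          _ = ⊥ := hind a
      set S : Set ι := {i : ι | ∃ l : L, (i : Subgroup Γ) = conjS (g * l) B} with hS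
      have h1 : conjS g D ≤ ⨆ i ∈ S, C i := by
        rw [hD]
        refine iSup_le fun l => ?_
        exact le_iSup₂ (f := fun (i : ι) (_ : i ∈ S) => C i)
          (⟨conjS (g * l) B, ⟨g * l, rfl⟩⟩ : ι) ⟨l, rfl⟩
      have h2 : (⨆ h ∈ {h : Γ | conjS h D ≠ conjS g D}, conjS h D) ≤ ⨆ i ∈ Sᶜ, C i := by
        refine iSup₂_le fun h hh => ?_
        rw [hD]
        refine iSup_le fun m => ?_
        refine le_iSup₂ (f := fun (i : ι) (_ : i ∈ Sᶜ) => C i)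
          (⟨conjS (h * m) B, ⟨h * m, rfl⟩⟩ : ι) ?_
        rintro ⟨l, hl⟩
        exact hne h g hh m l hl
      have hdisj := keyDisjoint C hcommι hindι (S := S) (T := Sᶜ) (fun i hi => by simpa using hi)
      have := hdisj.mono h1 h2
      rw [disjoint_iff] at this
      exact le_antisymm (le_trans (le_of_eq rfl) (by
        calc conjS g D ⊓ (⨆ h ∈ {h : Γ | conjS h D ≠ conjS g D}, conjS h D)
            ≤ (⨆ i ∈ S, C i) ⊓ ⨆ i ∈ Sᶜ, C i := inf_le_inf h1 h2
          _ = ⊥ := by rw [← disjoint_iff]; exact hdisj)) bot_le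
  -- normal closure
  · have hBleD : B ≤ D := by
      have := le_iSup₂ (f := fun (l : Γ) (_ : l ∈ L) => conjS l B) (1 : Γ) L.one_mem
      rwa [conjS_one] at this
    have e1 : (⨆ g : Γ, conjS g D) = ⨆ g : Γ, conjS g B := by
      apply le_antisymm
      · refine iSup_le fun g => ?_
        rw [hD]
        exact iSup_le fun l => le_iSup (fun k : Γ => conjS k B) (g * l)
      · exact iSup_mono fun g => conjS_mono g hBleD
    rw [e1, hclos]
    apply le_antisymm
    · exact Subgroup.normalClosure_mono (SetLike.coe_subset_coe.mpr hBleD)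
    · refine Subgroup.normalClosure_le_normal ?_
      have hD' : D ≤ Subgroup.normalClosure (B : Set Γ) := by
        rw [hDdef]
        refine iSup₂_le fun l _ => fun z hz => ?_
        rw [mem_conjS] at hz
        have hmem := Subgroup.subset_normalClosure (s := (B : Set Γ)) hz
        have h3 := (Subgroup.normalClosure_normal (s := (B : Set Γ))).conj_mem _ hmem l
        have : l * (l⁻¹ * z * l) * l⁻¹ = z := by group
        rwa [this] at h3
      exact fun y hy => hD' hy
end
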